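/- Let p be a prime and k, k', n, n' be natural numbers with 0 ≤ k < n and 0 ≤ k' < n'. If p^k * (p^n - p^k) = p^{k'} * (p^{n'} - p^{k'}), then k = k' and n = n'. -/
import Mathlib

lemma aux_rw (p k n : ℕ) (hp : 1 < p) (hk : k < n) :
    p ^ k * (p ^ n - p ^ k) = p ^ (2 * k) * (p ^ (n - k) - 1) := by
  rw [Nat.mul_sub, Nat.mul_sub, mul_one, ← pow_add, ← pow_add, ← pow_add,
    show k + n = 2 * k + (n - k) from by omega, show k + k = 2 * k from by omega]

lemma aux_val (p k n : ℕ) (hp : p.Prime) (hk : k < n) :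
    padicValNat p (p ^ (2 * k) * (p ^ (n - k) - 1)) = 2 * k := by
  haveI : Fact p.Prime := ⟨hp⟩
  have h1pow : 1 ≤ p ^ (n - k) := Nat.one_le_pow _ _ hp.pos
  have hpos : 0 < p ^ (n - k) - 1 := by
    have : 1 < p ^ (n - k) := Nat.one_lt_pow (by omega) hp.one_lt
    omega
  have hnd : ¬ p ∣ (p ^ (n - k) - 1) := by
    intro hd
    have hdvd : p ∣ p ^ (n - k) := dvd_pow_self p (by omega)
    have h3 := Nat.dvd_sub hdvd hd
    rw [Nat.sub_sub_self h1pow] at h3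
    have := Nat.dvd_one.mp h3
    have := hp.one_lt
    omega
  rw [padicValNat.mul (pow_pos hp.pos _).ne' hpos.ne', padicValNat.prime_pow,
    padicValNat.eq_zero_of_not_dvd hnd]
  omega

theorem stmt_0 (p k k' n n' : ℕ) (hp : p.Prime) (hk : k < n) (hk' : k' < n')
    (h : p ^ k * (p ^ n - p ^ k) = p ^ k' * (p ^ n' - p ^ k')) :
    k = k' ∧ n = n' := by
  rw [aux_rw p k n hp.one_lt hk, aux_rw p k' n' hp.one_lt hk'] at h
  have hkk : k = k' := by
    have h1 := aux_val p k n hp hk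
    have h2 := aux_val p k' n' hp hk'
    rw [h] at h1
    omega
  subst hkk
  have hc : p ^ (n - k) - 1 = p ^ (n' - k) - 1 :=
    Nat.eq_of_mul_eq_mul_left (pow_pos hp.pos _) h
  have h1 : 1 ≤ p ^ (n - k) := Nat.one_le_pow _ _ hp.pos
  have h2 : 1 ≤ p ^ (n' - k) := Nat.one_le_pow _ _ hp.pos
  have heq : p ^ (n - k) = p ^ (n' - k) := by omega
  have := Nat.pow_right_injective hp.two_le heq
  exact ⟨rfl, by omega⟩
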